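/- arXiv:1701.03399 — 4 statements merged into one kernel-verified Lean document; each statement's English description precedes it below -/
import Mathlib

section
/- Let p_0,…,p_N ≥ 0 with not all of p_1,…,p_{N−1} zero (i.e., the state is not supported only on indices 0 and N). If both Hankel matrices M_0 = (p_{i+j}) and M_1 = (p_{i+j+1}) (of maximal sizes ⌊N/2⌋+1 and ⌈N/2⌉ respectively) are positive semidefinite, then p_k > 0 for every k = 0, 1, …, N. -/
open scoped BigOperators

noncomputable section

/-- Number of ones (excitations) in an `N`-bit string. -/
def ones {N : ℕ} (f : Fin N → Fin 2) : ℕ :=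
  (Finset.univ.filter fun i => f i = 1).card

/-- The Dicke state `|D_k^N⟩` as a real vector in `(ℂ²)^{⊗N}` (it has real coordinates). -/
def dicke (N k : ℕ) : (Fin N → Fin 2) → ℝ :=
  fun f => if ones f = k then (Real.sqrt (N.choose k))⁻¹ else 0

/-- The rank-one projector `|D_k^N⟩⟨D_k^N|`. -/
def dickeProj (N k : ℕ) : Matrix (Fin N → Fin 2) (Fin N → Fin 2) ℝ :=
  fun x y => dicke N k x * dicke N k y

/-- The diagonal symmetric state `ρ_DS = ∑_k p_k |D_k^N⟩⟨D_k^N|`. -/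
def rhoDS (N : ℕ) (p : ℕ → ℝ) : Matrix (Fin N → Fin 2) (Fin N → Fin 2) ℝ :=
  ∑ k ∈ Finset.range (N + 1), p k • dickeProj N k

/-- Partial transpose with respect to the first `t` qubits. -/
def ptrans (N t : ℕ) (M : Matrix (Fin N → Fin 2) (Fin N → Fin 2) ℝ) :
    Matrix (Fin N → Fin 2) (Fin N → Fin 2) ℝ :=
  fun x y => M (fun i => if (i : ℕ) < t then y i else x i)
               (fun i => if (i : ℕ) < t then x i else y i)

/-- The `n × n` Hankel matrix with `(i,j)` entry `p (i + j + k)`. -/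
def hankel (p : ℕ → ℝ) (k n : ℕ) : Matrix (Fin n) (Fin n) ℝ :=
  fun i j => p ((i : ℕ) + (j : ℕ) + k)

/-!
A zero diagonal entry of a positive semidefinite matrix kills its row. Writing an index as
`m = 2i + r` with `r ∈ {0, 1}`, the entry `p m` sits on the diagonal of `M_r`, so it is
nonnegative, and if it vanishes then so does every `p (i + j + r)` in its row. Such moves
carry any zero of `p` in `[0, N]` down to `p 1` (halving), and from `p 1` up one step at a
time through every `p k` with `0 < k < N`.
-/

open scoped ComplexOrder Matrix

theorem Matrix.PosSemidef.apply_eq_zero_of_diag_eq_zero {n 𝕜 : Type*} [Fintype n]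
    [DecidableEq n] [RCLike 𝕜] {A : Matrix n n 𝕜} (hA : A.PosSemidef) {i : n} (hi : A i i = 0)
    (j : n) : A j i = 0 := by
  have hcol : A *ᵥ Pi.single i 1 = 0 :=
    (hA.dotProduct_mulVec_zero_iff _).mp (by simpa using hi)
  simpa using congrFun hcol j

section HankelZeros

variable {p : ℕ → ℝ} {k n i : ℕ}

lemma hankel_nonneg_of_posSemidef (h : (hankel p k n).PosSemidef) (hi : i < n) :
    0 ≤ p (i + i + k) :=
  h.diag_nonneg (i := ⟨i, hi⟩)

lemma hankel_eq_zero_of_posSemidef (h : (hankel p k n).PosSemidef) (hi : i < n)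
    (hz : p (i + i + k) = 0) {j : ℕ} (hj : j < n) : p (j + i + k) = 0 :=
  h.apply_eq_zero_of_diag_eq_zero (i := ⟨i, hi⟩) hz ⟨j, hj⟩

end HankelZeros

def HankelClosed (N : ℕ) (Z : Set ℕ) : Prop :=
  ∀ m ∈ Z, m ≤ N → ∀ j, 2 * j + m % 2 ≤ N → j + m / 2 + m % 2 ∈ Z

namespace HankelClosed

variable {N : ℕ} {Z : Set ℕ}

lemma one_mem (hZ : HankelClosed N Z) (hN : 2 ≤ N) {m : ℕ} (hm : m ∈ Z) (hmN : m ≤ N) :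
    1 ∈ Z := by
  induction m using Nat.strong_induction_on with
  | _ m ih =>
    rcases Nat.lt_or_ge m 2 with hm2 | hm2
    · interval_cases m
      · simpa using hZ 0 hm hmN 1 (by omega)
      · exact hm
    · exact ih (m / 2 + m % 2) (by omega) (by simpa using hZ m hm hmN 0 (by omega)) (by omega)

lemma mem_of_one_mem (hZ : HankelClosed N Z) (h1 : 1 ∈ Z) {k : ℕ} (hk : 1 ≤ k)
    (hkN : k < N) : k ∈ Z := by
  induction k, hk using Nat.le_induction with
  | base => exact h1
  | succ k hk ih =>
    have := hZ k (ih (by omega)) (by omega) (k / 2 + 1) (by omega)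
    rwa [show k / 2 + 1 + k / 2 + k % 2 = k + 1 by omega] at this

end HankelClosed

lemma posSemidef_hankel_mod_two {N m : ℕ} {p : ℕ → ℝ}
    (h0 : (hankel p 0 (N / 2 + 1)).PosSemidef) (h1 : (hankel p 1 ((N + 1) / 2)).PosSemidef)
    (hm : m ≤ N) : (hankel p (m % 2) ((N - m % 2) / 2 + 1)).PosSemidef := by
  rcases Nat.mod_two_eq_zero_or_one m with hr | hr
  · rwa [hr, Nat.sub_zero]
  · rwa [hr, show (N - 1) / 2 + 1 = (N + 1) / 2 by omega]

theorem stmt2_general (N : ℕ) (p : ℕ → ℝ)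
    (hnontriv : ∃ k, 0 < k ∧ k < N ∧ p k ≠ 0)
    (h0 : (hankel p 0 (N / 2 + 1)).PosSemidef)
    (h1 : (hankel p 1 ((N + 1) / 2)).PosSemidef) :
    ∀ k ≤ N, 0 < p k := by
  have hdiag : ∀ m, m / 2 + m / 2 + m % 2 = m := fun m => by omega
  have hnonneg : ∀ m ≤ N, 0 ≤ p m := fun m hm =>
    hdiag m ▸ hankel_nonneg_of_posSemidef (posSemidef_hankel_mod_two h0 h1 hm) (by omega)
  have hclosed : HankelClosed N {m | p m = 0} := by
    intro m hm hmN j hj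
    have h := posSemidef_hankel_mod_two h0 h1 hmN
    exact hankel_eq_zero_of_posSemidef h (by omega) ((hdiag m).symm ▸ hm) (by omega)
  obtain ⟨k₀, hk₀, hk₀N, hpk₀⟩ := hnontriv
  intro k hk
  refine (hnonneg k hk).lt_of_ne fun hpk => hpk₀ ?_
  exact hclosed.mem_of_one_mem (hclosed.one_mem (by omega) hpk.symm hk) hk₀ hk₀N

/-- Let `p_0,…,p_N ≥ 0` with some `p_k ≠ 0` for `0 < k < N`. If both maximal
Hankel matrices `M₀ = (p_{i+j})` (size `⌊N/2⌋+1`) and `M₁ = (p_{i+j+1})` (size `⌈N/2⌉`)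
are positive semidefinite, then `p_k > 0` for every `k = 0,…,N`. -/
theorem stmt2 (N : ℕ) (p : ℕ → ℝ) (hp : ∀ k, 0 ≤ p k)
    (hnontriv : ∃ k, 0 < k ∧ k < N ∧ p k ≠ 0)
    (h0 : (hankel p 0 (N / 2 + 1)).PosSemidef)
    (h1 : (hankel p 1 ((N + 1) / 2)).PosSemidef) :
    ∀ k ≤ N, 0 < p k :=
  stmt2_general N p hnontriv h0 h1
end
end

section
/- Let ρ be a bipartite density matrix on C^2 ⊗ C^d that equals its own partial transpose on the first (qubit) factor: ρ = ρ^{Γ_1}. If additionally the off-diagonal qubit blocks of ρ satisfy the Hermiticity structure forced by this invariance, then ρ is separable. Specialized consequence used in the paper: the extended matrix ρ_EXT = Σ_i p_i Σ_{m+l=2i} |D_m^N⟩⟨D_l^N| satisfies ρ_EXT = ρ_EXT^{Γ_t} for every t, hence if ρ_EXT ≥ 0 it is separable. -/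
/-!
Write `ρ = [[A, B], [B, C]]` in qubit blocks; invariance under `Γ₁` says exactly that `B` is
Hermitian. Let `S = √C` and let `R` be its pseudo-inverse. Since `ker C ⊆ ker B`, we have
`B = S (R B R) S`; diagonalising the Hermitian matrix `R B R = V Λ V*` and putting `Q = S V` gives
`C = Q Q*` and `B = Q Λ Q*`, while the generalised Schur complement `A - B R² B = A - Q Λ² Q*` is
positive semidefinite. Hence
`ρ = ∑ₖ (λₖ, 1)(λₖ, 1)ᵀ ⊗ qₖ qₖ* + |0⟩⟨0| ⊗ (A - Q Λ² Q*)`,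
a sum of Kronecker products of positive semidefinite matrices, each of which is a sum of
rank-one product states.
-/

open scoped BigOperators ComplexOrder

noncomputable section

/-- Partial transpose on the first (qubit) factor of a state on `ℂ² ⊗ ℂ^d`. -/
def ptransQubit (d : ℕ) (ρ : Matrix (Fin 2 × Fin d) (Fin 2 × Fin d) ℂ) :
    Matrix (Fin 2 × Fin d) (Fin 2 × Fin d) ℂ :=
  fun x y => ρ (y.1, x.2) (x.1, y.2)

/-- The rank-one product state `|u⟩⟨u| ⊗ |v⟩⟨v|` on `ℂ² ⊗ ℂ^d`. -/
def prodState2d (d : ℕ) (u : Fin 2 → ℂ) (v : Fin d → ℂ) :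
    Matrix (Fin 2 × Fin d) (Fin 2 × Fin d) ℂ :=
  fun x y => (u x.1 * v x.2) * (starRingEnd ℂ) (u y.1 * v y.2)

open Matrix
open scoped Kronecker

namespace Matrix

variable {𝕜 : Type*} [RCLike 𝕜] {n : Type*} [Fintype n]

section Blocks

variable {m : Type*} [Fintype m] {A : Matrix m m 𝕜} {B : Matrix m n 𝕜} {C : Matrix n n 𝕜}

lemma PosSemidef.mulVec_eq_zero_of_fromBlocks (hM : (fromBlocks A B Bᴴ C).PosSemidef)
    {y : n → 𝕜} (hy : C *ᵥ y = 0) : B *ᵥ y = 0 := by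
  have hw : fromBlocks A B Bᴴ C *ᵥ Sum.elim 0 y = 0 := by
    rw [← hM.dotProduct_mulVec_zero_iff]
    simp [fromBlocks_mulVec, hy, Function.star_sumElim]
  ext i
  simpa [fromBlocks_mulVec] using congrFun hw (Sum.inl i)

lemma PosSemidef.mul_eq_zero_of_fromBlocks (hM : (fromBlocks A B Bᴴ C).PosSemidef)
    {l : Type*} [Fintype l] [DecidableEq l] {X : Matrix n l 𝕜} (hX : C * X = 0) : B * X = 0 := by
  refine ext_of_mulVec_single fun j => ?_
  rw [← mulVec_mulVec, hM.mulVec_eq_zero_of_fromBlocks (by rw [mulVec_mulVec, hX, zero_mulVec]),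
    zero_mulVec]

lemma PosSemidef.sub_mul_mul_conjTranspose_of_fromBlocks [DecidableEq m] [DecidableEq n]
    (hM : (fromBlocks A B Bᴴ C).PosSemidef) {G : Matrix n n 𝕜} (hG : G.IsHermitian)
    (hGCG : G * C * G = G) : (A - B * G * Bᴴ).PosSemidef := by
  set T : Matrix (m ⊕ n) (m ⊕ n) 𝕜 := fromBlocks 1 0 (-(G * Bᴴ)) 1
  have hBGCGB : B * (G * (C * (G * Bᴴ))) = B * (G * Bᴴ) := by
    simp only [← Matrix.mul_assoc, hGCG]
  have hT : (Tᴴ * fromBlocks A B Bᴴ C * T).toBlocks₁₁ = A - B * G * Bᴴ := by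
    simp [T, fromBlocks_conjTranspose, fromBlocks_multiply, hG.eq, Matrix.add_mul,
      Matrix.mul_assoc, hBGCGB, sub_eq_add_neg]
  exact hT ▸ (hM.conjTranspose_mul_mul_same T).submatrix Sum.inl

end Blocks

variable [DecidableEq n]

lemma mul_diagonal_mul_conjTranspose_apply (Q : Matrix n n 𝕜) (c : n → 𝕜) (i j : n) :
    (Q * diagonal c * Qᴴ) i j = ∑ k, c k * (Q i k * star (Q j k)) := by
  simp [mul_apply, diagonal, mul_left_comm, mul_assoc]

namespace IsHermitian

variable {A : Matrix n n 𝕜} (hA : A.IsHermitian)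
include hA

lemma cfc_mul (f g : ℝ → ℝ) : hA.cfc f * hA.cfc g = hA.cfc (f * g) := by
  simp only [IsHermitian.cfc, ← map_mul, diagonal_mul_diagonal]
  congr! with i
  simp

lemma cfc_congr {f g : ℝ → ℝ} (h : ∀ i, f (hA.eigenvalues i) = g (hA.eigenvalues i)) :
    hA.cfc f = hA.cfc g := by
  simp only [IsHermitian.cfc, Function.comp_def, h]

lemma cfc_id : hA.cfc id = A := hA.spectral_theorem.symm

lemma isHermitian_cfc (f : ℝ → ℝ) : (hA.cfc f).IsHermitian := by
  rw [← hA.cfc_eq]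
  exact cfc_predicate f A

end IsHermitian

/-- `S = √C` and `R = (√C)⁺`: the convention `0⁻¹ = 0` makes `x ↦ (√x)⁻¹` the pseudo-inverse. -/
lemma PosSemidef.exists_sqrt_pinvSqrt {C : Matrix n n 𝕜} (hC : C.PosSemidef) :
    ∃ S R : Matrix n n 𝕜, S.IsHermitian ∧ R.IsHermitian ∧ R * S = S * R ∧ S * S = C ∧
      C * (S * R) = C ∧ R * R * C * (R * R) = R * R := by
  have hC' := hC.isHermitian
  have hμ := hC.eigenvalues_nonneg
  refine ⟨hC'.cfc Real.sqrt, hC'.cfc fun x => (√x)⁻¹, hC'.isHermitian_cfc _,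
    hC'.isHermitian_cfc _, ?_, ?_, ?_, ?_⟩
  · simp only [hC'.cfc_mul, mul_comm]
  · conv_rhs => rw [← hC'.cfc_id]
    rw [hC'.cfc_mul]
    exact hC'.cfc_congr fun i => Real.mul_self_sqrt (hμ i)
  · conv => enter [1, 1]; rw [← hC'.cfc_id]
    conv_rhs => rw [← hC'.cfc_id]
    rw [hC'.cfc_mul, hC'.cfc_mul]
    refine hC'.cfc_congr fun i => ?_
    simp only [Pi.mul_apply, id]
    rcases (hμ i).eq_or_lt with h | h
    · simp [← h]
    · field_simp [Real.sqrt_pos.2 h]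
  · conv_lhs => enter [1, 2]; rw [← hC'.cfc_id]
    simp only [hC'.cfc_mul]
    refine hC'.cfc_congr fun i => ?_
    simp only [Pi.mul_apply, id]
    rcases (hμ i).eq_or_lt with h | h
    · simp [← h]
    · nth_rw 3 [← Real.mul_self_sqrt (hμ i)]
      field_simp [Real.sqrt_pos.2 h]

theorem PosSemidef.exists_sqrt_factorization_of_fromBlocks {A B C : Matrix n n 𝕜}
    (hM : (fromBlocks A B B C).PosSemidef) (hB : B.IsHermitian) :
    ∃ S X : Matrix n n 𝕜, S.IsHermitian ∧ X.IsHermitian ∧ C = S * S ∧ B = S * X * S ∧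
      (A - S * (X * X) * S).PosSemidef := by
  replace hM : (fromBlocks A B Bᴴ C).PosSemidef := by rwa [hB.eq]
  have hC : C.PosSemidef := hM.submatrix Sum.inr
  obtain ⟨S, R, hS, hR, hRS, hSS, hCP, hRRCRR⟩ := hC.exists_sqrt_pinvSqrt
  have hBP : B * (S * R) = B := by
    have := hM.mul_eq_zero_of_fromBlocks (X := 1 - S * R)
      (by rw [Matrix.mul_sub, hCP, mul_one, sub_self])
    rwa [Matrix.mul_sub, mul_one, sub_eq_zero, eq_comm] at this
  have hPB : S * R * B = B := by
    simpa [Matrix.conjTranspose_mul, hS.eq, hR.eq, hB.eq, hRS] using congrArg (·ᴴ) hBP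
  refine ⟨S, R * B * R, hS, ?_, hSS.symm, ?_, ?_⟩
  · simp only [IsHermitian, Matrix.conjTranspose_mul, hR.eq, hB.eq, Matrix.mul_assoc]
  · calc B = S * R * B * (R * S) := by rw [hRS, hPB, hBP]
      _ = _ := by simp only [Matrix.mul_assoc]
  · have hBRRB : B * (R * R) * Bᴴ = S * (R * B * R * (R * B * R)) * S := by
      calc B * (R * R) * Bᴴ = S * R * B * (R * R) * (B * (R * S)) := by
            rw [hB.eq, hRS, hPB, hBP]
        _ = _ := by simp only [Matrix.mul_assoc]
    exact hBRRB ▸ hM.sub_mul_mul_conjTranspose_of_fromBlocks (by simp [IsHermitian, hR.eq])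
      hRRCRR

theorem PosSemidef.exists_simultaneous_congruence_of_fromBlocks {A B C : Matrix n n 𝕜}
    (hM : (fromBlocks A B B C).PosSemidef) (hB : B.IsHermitian) :
    ∃ (Q : Matrix n n 𝕜) (lam : n → ℝ), C = Q * Qᴴ ∧
      B = Q * diagonal (fun k => (lam k : 𝕜)) * Qᴴ ∧
      (A - Q * diagonal (fun k => (lam k : 𝕜) ^ 2) * Qᴴ).PosSemidef := by
  obtain ⟨S, X, hS, hX, hC, hB, hA⟩ := hM.exists_sqrt_factorization_of_fromBlocks hB
  obtain ⟨V, lam, hVV, hVV', hXV⟩ : ∃ (V : Matrix n n 𝕜) (lam : n → ℝ), Vᴴ * V = 1 ∧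
      V * Vᴴ = 1 ∧ X = V * diagonal (fun k => (lam k : 𝕜)) * Vᴴ :=
    ⟨_, _, Unitary.coe_star_mul_self _, Unitary.coe_mul_star_self _, hX.spectral_theorem⟩
  have hQ : (S * V)ᴴ = Vᴴ * S := by rw [Matrix.conjTranspose_mul, hS.eq]
  refine ⟨S * V, lam, ?_, ?_, ?_⟩
  · rw [hC, hQ, Matrix.mul_assoc, ← Matrix.mul_assoc V, hVV', Matrix.one_mul]
  · rw [hB, hQ, hXV]
    simp only [Matrix.mul_assoc]
  · convert hA using 2
    calc S * V * diagonal (fun k => (lam k : 𝕜) ^ 2) * (S * V)ᴴ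
        = S * (V * diagonal (fun k => (lam k : 𝕜)) * (Vᴴ * V) *
            diagonal (fun k => (lam k : 𝕜)) * Vᴴ) * S := by
          rw [hQ, hVV, Matrix.mul_one, Matrix.mul_assoc V, diagonal_mul_diagonal]
          simp only [sq, Matrix.mul_assoc]
      _ = S * (X * X) * S := by simp only [hXV, Matrix.mul_assoc]

end Matrix

section Separable

variable {ι κ : Type*}

def productState (u : ι → ℂ) (v : κ → ℂ) : Matrix (ι × κ) (ι × κ) ℂ :=
  vecMulVec u (star u) ⊗ₖ vecMulVec v (star v)

/-- Nonnegative weights are absorbed into the vectors, so convex combinations of product states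
are exactly the finite sums of `productState`s. -/
def separableCone (ι κ : Type*) : AddSubmonoid (Matrix (ι × κ) (ι × κ) ℂ) :=
  AddSubmonoid.closure (Set.range fun p : (ι → ℂ) × (κ → ℂ) => productState p.1 p.2)

lemma productState_mem_separableCone (u : ι → ℂ) (v : κ → ℂ) :
    productState u v ∈ separableCone ι κ :=
  AddSubmonoid.subset_closure ⟨(u, v), rfl⟩

lemma kronecker_mem_separableCone [Finite ι] [Finite κ] {P : Matrix ι ι ℂ} {R : Matrix κ κ ℂ}
    (hP : P.PosSemidef) (hR : R.PosSemidef) : P ⊗ₖ R ∈ separableCone ι κ := by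
  obtain ⟨r, a, rfl⟩ := posSemidef_iff_eq_sum_vecMulVec.mp hP
  obtain ⟨s, b, rfl⟩ := posSemidef_iff_eq_sum_vecMulVec.mp hR
  have : (∑ i, vecMulVec (a i) (star (a i))) ⊗ₖ ∑ j, vecMulVec (b j) (star (b j)) =
      ∑ i, ∑ j, productState (a i) (b j) := by
    ext ⟨x, y⟩ ⟨x', y'⟩
    simp [productState, kroneckerMap_apply, Matrix.sum_apply, Finset.sum_mul_sum]
  rw [this]
  exact sum_mem fun i _ => sum_mem fun j _ => productState_mem_separableCone _ _

lemma exists_eq_sum_productState_of_mem_separableCone {ρ : Matrix (ι × κ) (ι × κ) ℂ}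
    (h : ρ ∈ separableCone ι κ) :
    ∃ (r : ℕ) (u : Fin r → ι → ℂ) (v : Fin r → κ → ℂ), ρ = ∑ s, productState (u s) (v s) := by
  induction h using AddSubmonoid.closure_induction with
  | mem _ h =>
    obtain ⟨⟨u, v⟩, rfl⟩ := h
    exact ⟨1, fun _ => u, fun _ => v, by simp⟩
  | zero => exact ⟨0, Fin.elim0, Fin.elim0, by simp⟩
  | add _ _ _ _ h₁ h₂ =>
    obtain ⟨r₁, u₁, v₁, rfl⟩ := h₁
    obtain ⟨r₂, u₂, v₂, rfl⟩ := h₂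
    exact ⟨r₁ + r₂, Fin.append u₁ u₂, Fin.append v₁ v₂, by simp [Fin.sum_univ_add]⟩

end Separable

theorem mem_separableCone_of_posSemidef_of_swap {n : Type*} [Fintype n] [DecidableEq n]
    {ρ : Matrix (Fin 2 × n) (Fin 2 × n) ℂ} (hρ : ρ.PosSemidef)
    (hswap : ∀ a b i j, ρ (a, i) (b, j) = ρ (b, i) (a, j)) : ρ ∈ separableCone (Fin 2) n := by
  let blk (a b : Fin 2) : Matrix n n ℂ := ρ.submatrix (Prod.mk a) (Prod.mk b)
  have hM : (fromBlocks (blk 0 0) (blk 0 1) (blk 0 1) (blk 1 1)).PosSemidef := by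
    convert hρ.submatrix (Sum.elim (Prod.mk 0) (Prod.mk 1)) using 1
    ext (i | i) (j | j) <;> simp [blk, hswap 1 0]
  have hB : (blk 0 1).IsHermitian := by
    ext i j
    simpa [blk, hswap 1 0] using hρ.isHermitian.apply (1, i) (0, j)
  obtain ⟨Q, lam, hCQ, hBQ, hAQ⟩ := hM.exists_simultaneous_congruence_of_fromBlocks hB
  set S := blk 0 0 - Q * diagonal (fun k => (lam k : ℂ) ^ 2) * Qᴴ
  have hρ_eq : ρ = ∑ k, productState ![(lam k : ℂ), 1] (fun i => Q i k) +
      vecMulVec ![1, 0] (star ![1, 0]) ⊗ₖ S := by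
    ext ⟨a, i⟩ ⟨b, j⟩
    have hC' := congrFun₂ hCQ i j
    have hB' := congrFun₂ hBQ i j
    have hS' : S i j = _ := Matrix.sub_apply _ _ i j
    rw [mul_diagonal_mul_conjTranspose_apply] at hB' hS'
    simp only [blk, submatrix_apply, mul_apply, conjTranspose_apply, Complex.star_def, sq]
      at hC' hB' hS'
    simp only [productState, Matrix.add_apply, Matrix.sum_apply, kronecker_apply,
      vecMulVec_apply, Pi.star_apply]
    fin_cases a <;> fin_cases b <;>
      simp only [Fin.zero_eta, Fin.mk_one, Matrix.cons_val_zero, Matrix.cons_val_one,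
        Complex.star_def, Complex.conj_ofReal, map_one, map_zero, mul_one, one_mul, zero_mul,
        mul_zero, add_zero]
    · rw [hS']; ring
    · exact hB'
    · rw [hswap 1 0]; exact hB'
    · exact hC'
  rw [hρ_eq]
  exact add_mem (sum_mem fun k _ => productState_mem_separableCone _ _)
    (kronecker_mem_separableCone (posSemidef_vecMulVec_self_star _) hAQ)

theorem prodState2d_eq_productState (d : ℕ) (u : Fin 2 → ℂ) (v : Fin d → ℂ) :
    prodState2d d u v = productState u v := by
  ext ⟨a, i⟩ ⟨b, j⟩
  simp only [prodState2d, productState, kronecker_apply, vecMulVec_apply, Pi.star_apply,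
    Complex.star_def]
  rw [map_mul]
  ring

/-- Kraus–Cirac–Karnas–Lewenstein: A positive semidefinite state on `ℂ² ⊗ ℂ^d`
which is invariant under partial transposition of the qubit factor, `ρ = ρ^{Γ₁}`, is
separable, i.e. a convex combination of product states. -/
theorem stmt8 (d : ℕ) (ρ : Matrix (Fin 2 × Fin d) (Fin 2 × Fin d) ℂ)
    (hpos : ρ.PosSemidef) (hinv : ρ = ptransQubit d ρ) :
    ∃ (r : ℕ) (w : Fin r → ℝ) (u : Fin r → Fin 2 → ℂ) (v : Fin r → Fin d → ℂ),
      (∀ s, 0 ≤ w s) ∧ ρ = ∑ s, (w s : ℂ) • prodState2d d (u s) (v s) := by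
  have hswap : ∀ a b i j, ρ (a, i) (b, j) = ρ (b, i) (a, j) := fun a b i j =>
    congrFun₂ hinv (a, i) (b, j)
  obtain ⟨r, u, v, hρ⟩ := exists_eq_sum_productState_of_mem_separableCone
    (mem_separableCone_of_posSemidef_of_swap hpos hswap)
  refine ⟨r, 1, u, v, fun _ => zero_le_one, ?_⟩
  simpa [prodState2d_eq_productState] using hρ
end
end

section
/- Define Q_1 = 75 + 12cos θ + 3cos²θ + 48cos φ − 18cos²φ − 3sin²θ + 24 sin θ sin φ + 18 sin²φ and Q_2 = 46 + 6cos²θ − 16 cos θ cos φ − 36 cos²φ − 6 sin²θ + 32 sin θ sin φ + 36 sin²φ. Then there exist angles θ, φ (e.g., θ ≈ 3.916, φ ≈ 3.002) for which simultaneously Q_1 < 0 and Q_2 < 0; in particular min over θ,φ of Q_1 is ≤ −0.68 and of Q_2 is ≤ −2.9 at a common point. -/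
open scoped BigOperators

noncomputable section

/-- The Bell value of the Dicke states `|D_{1,3}^4⟩` as a function of the device angles. -/
def Q1 (θ φ : ℝ) : ℝ :=
  75 + 12 * Real.cos θ + 3 * Real.cos θ ^ 2 + 48 * Real.cos φ - 18 * Real.cos φ ^ 2
    - 3 * Real.sin θ ^ 2 + 24 * Real.sin θ * Real.sin φ + 18 * Real.sin φ ^ 2

/-- The Bell value of the Dicke state `|D_2^4⟩` as a function of the device angles. -/
def Q2 (θ φ : ℝ) : ℝ :=
  46 + 6 * Real.cos θ ^ 2 - 16 * Real.cos θ * Real.cos φ - 36 * Real.cos φ ^ 2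
    - 6 * Real.sin θ ^ 2 + 32 * Real.sin θ * Real.sin φ + 36 * Real.sin φ ^ 2

/-! At angles `θ = 2 arctan t`, `φ = 2 arctan s` with `t, s` rational, the Weierstrass
substitution makes every cosine and sine rational, so `Q1` and `Q2` can be evaluated exactly.
Taking `t, s` close to the half-tangents of the numerically found angles
`θ ≈ 3.916`, `φ ≈ 3.002` gives both bounds by exact rational arithmetic. -/

open Real

theorem cos_two_mul_arctan (x : ℝ) : cos (2 * arctan x) = (1 - x ^ 2) / (1 + x ^ 2) := by
  rw [cos_two_mul, cos_sq_arctan]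
  field_simp
  ring

theorem sin_two_mul_arctan (x : ℝ) : sin (2 * arctan x) = 2 * x / (1 + x ^ 2) := by
  have hcos : cos (arctan x) ≠ 0 := (cos_arctan_pos x).ne'
  rw [sin_two_mul, ← tan_mul_cos hcos, tan_arctan, mul_assoc, mul_assoc, ← sq, cos_sq_arctan]
  ring

/-- There exist device angles `θ, φ` for which both `Q1` and `Q2` are
simultaneously negative; in particular at a common point `Q1 ≤ -0.68` and `Q2 ≤ -2.9`. -/
theorem stmt14 :
    ∃ θ φ : ℝ, Q1 θ φ < 0 ∧ Q2 θ φ < 0 ∧ Q1 θ φ ≤ -0.68 ∧ Q2 θ φ ≤ -2.9 := by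
  set θ := 2 * arctan (-2453 / 1000)
  set φ := 2 * arctan (1429 / 100)
  have hQ1 : Q1 θ φ ≤ -0.68 := by
    simp only [Q1, θ, φ, cos_two_mul_arctan, sin_two_mul_arctan]
    norm_num
  have hQ2 : Q2 θ φ ≤ -2.9 := by
    simp only [Q2, θ, φ, cos_two_mul_arctan, sin_two_mul_arctan]
    norm_num
  exact ⟨θ, φ, by linarith, by linarith, hQ1, hQ2⟩
end
end

section
/- For N = 4 qubits, if the 2×2 conditions 8 p_0 p_2 ≥ 3 p_1^2 and 8 p_2 p_4 ≥ 3 p_3^2 and 9 p_1 p_3 ≥ 4 p_2^2 hold together with p_4(72 p_0 p_2 − 27 p_1^2) − 2 p_2^3 − 9 p_3 (p_1 p_2 + 3 p_0 p_3) ≥ 0, then the partial transpose of ρ_DS = Σ p_k |D_k^4⟩⟨D_k^4| with respect to the 1|3 partition is also positive semidefinite (PPT region for 2|2 is contained in PPT region for 1|3). -/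
/-!
Transposing the first qubit moves the first bit between row and column, so an entry of
`ρ_DS^{Γ₁}` only depends on the first bit and on the weight of the remaining `N - 1` bits of its
row and column string: `ρ_DS^{Γ₁}` is a submatrix of a `2N × 2N` matrix. With `q k = p k / C(N, k)`,
that matrix is block diagonal with `1 × 1` blocks `q 1`, `q (N - 1)` and `2 × 2` Hankel blocks
`[[q a, q (a + 1)], [q (a + 1), q (a + 2)]]`, hence positive semidefinite as soon as `q` is
nonnegative and log-concave on `0, …, N`. For `N = 4` the three log-concavity inequalities are
exactly the `2 × 2` conditions.
-/

open scoped BigOperators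

noncomputable section

open Matrix

lemma ones_eq_sum {N : ℕ} (f : Fin N → Fin 2) : ones f = ∑ i, (f i : ℕ) := by
  rw [ones, Finset.card_filter]
  refine Finset.sum_congr rfl fun i _ => ?_
  rcases Fin.exists_fin_two.mp ⟨f i, rfl⟩ with h | h <;> simp [h]

lemma ones_le {N : ℕ} (f : Fin N → Fin 2) : ones f ≤ N :=
  (Finset.card_filter_le _ _).trans_eq (Finset.card_fin N)

lemma ones_succ {n : ℕ} (f : Fin (n + 1) → Fin 2) : ones f = f 0 + ones (Fin.tail f) := by
  simp only [ones_eq_sum, Fin.sum_univ_succ, Fin.tail]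

lemma rhoDS_apply (N : ℕ) (p : ℕ → ℝ) (x y : Fin N → Fin 2) :
    rhoDS N p x y = if ones x = ones y then p (ones x) / N.choose (ones x) else 0 := by
  simp only [rhoDS, Matrix.sum_apply, Matrix.smul_apply, smul_eq_mul, dickeProj, dicke]
  rw [Finset.sum_eq_single (ones x)]
  · by_cases h : ones x = ones y
    · simp [h, ← mul_inv, div_eq_mul_inv]
    · simp [h, Ne.symm h]
  · intro k _ hne
    simp [Ne.symm hne]
  · exact fun h => absurd (Finset.mem_range.2 (Nat.lt_succ_of_le (ones_le x))) h

lemma ones_swapHead {n : ℕ} (x y : Fin (n + 1) → Fin 2) :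
    ones (fun i : Fin (n + 1) => if (i : ℕ) < 1 then y i else x i) = y 0 + ones (Fin.tail x) :=
  ones_succ _

def headTailOnes {n : ℕ} (x : Fin (n + 1) → Fin 2) : Fin 2 × Fin (n + 1) :=
  (x 0, ⟨ones (Fin.tail x), Nat.lt_succ_of_le (ones_le _)⟩)

def ptransOneReduced (n : ℕ) (q : ℕ → ℝ) : Matrix (Fin 2 × Fin (n + 1)) (Fin 2 × Fin (n + 1)) ℝ :=
  of fun c d => if (d.1 : ℕ) + c.2 = c.1 + d.2 then q (d.1 + c.2) else 0

lemma ptransOneReduced_isHermitian (n : ℕ) (q : ℕ → ℝ) : (ptransOneReduced n q).IsHermitian := by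
  ext c d
  simp only [conjTranspose_apply, ptransOneReduced, of_apply, star_trivial]
  by_cases h : (c.1 : ℕ) + d.2 = d.1 + c.2
  · rw [if_pos h, if_pos h.symm, h]
  · rw [if_neg h, if_neg (Ne.symm h)]

lemma ptrans_one_rhoDS (n : ℕ) (p : ℕ → ℝ) :
    ptrans (n + 1) 1 (rhoDS (n + 1) p) =
      (ptransOneReduced n fun k => p k / (n + 1).choose k).submatrix headTailOnes headTailOnes := by
  ext x y
  simp only [ptrans, rhoDS_apply, ones_swapHead, submatrix_apply, ptransOneReduced,
    of_apply, headTailOnes]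

lemma quadratic_nonneg_of_sq_le_mul {a b c : ℝ} (ha : 0 ≤ a) (hc : 0 ≤ c) (h : b ^ 2 ≤ a * c)
    (x y : ℝ) : 0 ≤ a * x ^ 2 + 2 * b * x * y + c * y ^ 2 := by
  rcases ha.lt_or_eq with ha | rfl
  · nlinarith [sq_nonneg (a * x + b * y), sq_nonneg y]
  · have hb : b = 0 := by nlinarith [sq_nonneg b]
    subst hb
    nlinarith [sq_nonneg y]

lemma hankel_isHermitian (q : ℕ → ℝ) (k n : ℕ) : (hankel q k n).IsHermitian := by
  ext i j
  simp [hankel, add_comm (i : ℕ)]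

lemma hankel_two_posSemidef (q : ℕ → ℝ) (k : ℕ) (h₀ : 0 ≤ q k) (h₂ : 0 ≤ q (k + 2))
    (h : q (k + 1) ^ 2 ≤ q k * q (k + 2)) : (hankel q k 2).PosSemidef := by
  refine .of_dotProduct_mulVec_nonneg (hankel_isHermitian q k 2) fun w => ?_
  have := quadratic_nonneg_of_sq_le_mul h₀ h₂ h (w 0) (w 1)
  simp only [dotProduct, mulVec, hankel, Fin.sum_univ_two, star_trivial, Fin.val_zero,
    Fin.val_one, zero_add, add_zero, Nat.reduceAdd, add_comm _ k]
  linarith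

lemma sum_sum_ite_one_add_eq {M : Type*} [AddCommMonoid M] {n : ℕ}
    (f : Fin (n + 1) → Fin (n + 1) → M) :
    ∑ a : Fin (n + 1), ∑ b : Fin (n + 1), (if 1 + (a : ℕ) = b then f a b else 0) =
      ∑ a : Fin n, f a.castSucc a.succ := by
  rw [Fin.sum_univ_castSucc]
  have hlast (b : Fin n) : n ≠ b := b.isLt.ne'
  simp [Fin.sum_univ_succ (n := n), add_comm 1, Fin.val_inj, hlast]

lemma dotProduct_ptransOneReduced_mulVec (n : ℕ) (q : ℕ → ℝ) (v : Fin 2 × Fin (n + 1) → ℝ) :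
    star v ⬝ᵥ (ptransOneReduced n q *ᵥ v) = q 1 * v (1, 0) ^ 2 + q n * v (0, Fin.last n) ^ 2 +
      ∑ a : Fin n, star ![v (0, a.castSucc), v (1, a.succ)] ⬝ᵥ
        (hankel q a 2 *ᵥ ![v (0, a.castSucc), v (1, a.succ)]) := by
  simp only [dotProduct, mulVec, ptransOneReduced, of_apply, star_trivial,
    Fintype.sum_prod_type, Fin.sum_univ_two, Fin.val_zero, Fin.val_one, zero_add,
    ite_mul, zero_mul, Fin.val_inj, Nat.add_left_cancel_iff, Finset.sum_ite_eq, Finset.mem_univ,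
    if_true, mul_add, Finset.sum_add_distrib, Finset.mul_sum, mul_ite, mul_zero]
  rw [sum_sum_ite_one_add_eq, Finset.sum_comm (γ := Fin (n + 1))]
  simp only [@eq_comm ℕ _ (1 + _)]
  rw [sum_sum_ite_one_add_eq, Fin.sum_univ_castSucc, Fin.sum_univ_succ (f := fun x => v (1, x) * _)]
  simp only [Fin.isValue, Fin.val_castSucc, Fin.val_last, Fin.val_succ, Fin.coe_ofNat_eq_mod,
    Nat.zero_mod, add_zero, Nat.succ_eq_add_one, Nat.reduceAdd, cons_val_zero, hankel, zero_add,
    cons_val_one, cons_val_fin_one, Nat.mod_succ]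
  ring_nf

lemma ptransOneReduced_posSemidef (n : ℕ) (q : ℕ → ℝ) (hq : ∀ k ≤ n + 1, 0 ≤ q k)
    (hlc : ∀ k, k + 2 ≤ n + 1 → q (k + 1) ^ 2 ≤ q k * q (k + 2)) :
    (ptransOneReduced n q).PosSemidef := by
  refine .of_dotProduct_mulVec_nonneg (ptransOneReduced_isHermitian n q) fun v => ?_
  rw [dotProduct_ptransOneReduced_mulVec]
  have hblock (a : Fin n) : (hankel q a 2).PosSemidef :=
    hankel_two_posSemidef q a (hq a (by omega)) (hq (a + 2) (by omega)) (hlc a (by omega))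
  have h₁ := hq 1 (by omega)
  have hn := hq n (by omega)
  have hsum := Finset.sum_nonneg fun a (_ : a ∈ Finset.univ) => (hblock a).dotProduct_mulVec_nonneg
    ![v (0, a.castSucc), v (1, a.succ)]
  positivity

theorem stmt16_general (p : ℕ → ℝ) (hp : ∀ k, 0 ≤ p k)
    (hE1 : 8 * p 0 * p 2 - 3 * p 1 ^ 2 ≥ 0)
    (hE2 : 9 * p 1 * p 3 - 4 * p 2 ^ 2 ≥ 0)
    (hE3 : 8 * p 2 * p 4 - 3 * p 3 ^ 2 ≥ 0) :
    (ptrans 4 1 (rhoDS 4 p)).PosSemidef := by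
  have hq : ∀ k ≤ 4, 0 ≤ p k / (4 : ℕ).choose k := fun k _ => div_nonneg (hp k) (Nat.cast_nonneg _)
  have hlc : ∀ k, k + 2 ≤ 4 →
      (p (k + 1) / (4 : ℕ).choose (k + 1)) ^ 2 ≤
        p k / (4 : ℕ).choose k * (p (k + 2) / (4 : ℕ).choose (k + 2)) := by
    intro k hk
    obtain rfl | rfl | rfl : k = 0 ∨ k = 1 ∨ k = 2 := by omega
    all_goals norm_num [Nat.choose]; nlinarith
  rw [ptrans_one_rhoDS 3 p]
  exact (ptransOneReduced_posSemidef 3 _ hq hlc).submatrix _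

/-- For `N = 4` qubits, if `8p₀p₂ ≥ 3p₁²`, `9p₁p₃ ≥ 4p₂²`, `8p₂p₄ ≥ 3p₃²`
and `p₄(72p₀p₂ - 27p₁²) - 2p₂³ - 9p₃(p₁p₂ + 3p₀p₃) ≥ 0` (i.e. `ρ_DS` is PPT w.r.t. the
`2|2` partition), then the partial transpose of `ρ_DS = ∑ p_k |D_k^4⟩⟨D_k^4|` w.r.t. the
`1|3` partition is also positive semidefinite. -/
theorem stmt16 (p : ℕ → ℝ) (hp : ∀ k, 0 ≤ p k)
    (hsum : ∑ k ∈ Finset.range 5, p k = 1)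
    (hE1 : 8 * p 0 * p 2 - 3 * p 1 ^ 2 ≥ 0)
    (hE2 : 9 * p 1 * p 3 - 4 * p 2 ^ 2 ≥ 0)
    (hE3 : 8 * p 2 * p 4 - 3 * p 3 ^ 2 ≥ 0)
    (hF2 : p 4 * (72 * p 0 * p 2 - 27 * p 1 ^ 2) - 2 * p 2 ^ 3
        - 9 * p 3 * (p 1 * p 2 + 3 * p 0 * p 3) ≥ 0) :
    (ptrans 4 1 (rhoDS 4 p)).PosSemidef :=
  stmt16_general p hp hE1 hE2 hE3
end
end
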